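/- The function s is strictly decreasing on the interval (0, 1], and s(1) = π/√12. -/

import Mathlib

open Real

/-- Florian's bound. -/
noncomputable def florianS (q : ℝ) : ℝ :=
  (π * q ^ 2 + 2 * (1 - q ^ 2) * arcsin (q / (1 + q))) / (2 * q * Real.sqrt (1 + 2 * q))

/-!
Write `s = N / D` with `D q = 2 q √(1 + 2q)`. Multiplying `N' D - N D'` by `√(1 + 2q)` and
using `√(1 + 2q)² = 1 + 2q`, the sign of `s'` is that of `florianNum q`. Its negativity on
`(0, 1)` comes from two lower bounds for `arcsin x`, `x = q / (1 + q)`: `arcsin x > x` for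
`q ≤ 1/2`, and the tangent line of the convex `arcsin` at `x = 1/2` (the tangent of the concave
`sin` at `π/6`) for `q ≥ 1/2`. In both cases what remains is `a √(1 + 2q) < b` for polynomials
`a, b`, which after squaring is a polynomial inequality settled with `3.14 < π < 3.15` and
`√3 < 7/4`.
-/

lemma mul_sqrt_lt_of_sq_mul_lt {a b c : ℝ} (ha : 0 ≤ a) (hb : 0 < b) (h : a ^ 2 * c < b ^ 2) :
    a * √c < b := by
  rwa [← Real.sqrt_sq ha, ← Real.sqrt_mul (sq_nonneg a), Real.sqrt_lt' hb]

lemma sin_le_sin_add_cos_mul_sub {a t : ℝ} (ha : a ∈ Set.Icc 0 π) (ht : t ∈ Set.Icc 0 π) :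
    sin t ≤ sin a + cos a * (t - a) := by
  have hconv : ConvexOn ℝ (Set.Icc 0 π) (fun x => -sin x) :=
    strictConcaveOn_sin_Icc.concaveOn.neg
  have hderiv : HasDerivAt (fun x => -sin x) (-cos a) a := (hasDerivAt_sin a).neg
  rcases lt_trichotomy t a with hta | rfl | hat
  · have := hconv.slope_le_of_hasDerivAt ht ha hta hderiv
    rw [slope_def_field, div_le_iff₀ (sub_pos.2 hta)] at this
    linarith
  · simp
  · have := hconv.le_slope_of_hasDerivAt ha ht hat hderiv
    rw [slope_def_field, le_div_iff₀ (sub_pos.2 hat)] at this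
    linarith

lemma pi_div_six_sub_le_arcsin {x : ℝ} (hx₀ : 0 ≤ x) (hx₁ : x ≤ 1) :
    π / 6 - √3 / 3 * (1 - 2 * x) ≤ arcsin x := by
  have htan := sin_le_sin_add_cos_mul_sub (a := π / 6) (t := arcsin x)
    ⟨by positivity, by linarith [pi_pos]⟩
    ⟨arcsin_nonneg.2 hx₀, by linarith [arcsin_le_pi_div_two x, pi_pos]⟩
  rw [sin_arcsin (by linarith) hx₁, sin_pi_div_six, cos_pi_div_six] at htan
  have h3 : √3 * √3 = 3 := Real.mul_self_sqrt (by norm_num)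
  linear_combination (2 * √3 / 3) * htan + (arcsin x - π / 6) / 3 * h3

lemma hasDerivAt_arcsin_div_one_add {q : ℝ} (hq : 0 < 1 + 2 * q) :
    HasDerivAt (fun q => arcsin (q / (1 + q))) (1 / ((1 + q) * √(1 + 2 * q))) q := by
  have hq₁ : 0 < 1 + q := by linarith
  have hx : -1 < q / (1 + q) ∧ q / (1 + q) < 1 := by
    constructor
    · rw [lt_div_iff₀ hq₁]; linarith
    · rw [div_lt_one hq₁]; linarith
  have hsqrt : √(1 - (q / (1 + q)) ^ 2) = √(1 + 2 * q) / (1 + q) := by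
    rw [show 1 - (q / (1 + q)) ^ 2 = (1 + 2 * q) / (1 + q) ^ 2 by field_simp; ring,
      Real.sqrt_div hq.le, Real.sqrt_sq hq₁.le]
  have hdiv : HasDerivAt (fun q => q / (1 + q)) (1 / (1 + q) ^ 2) q := by
    refine ((hasDerivAt_id q).div ((hasDerivAt_id q).const_add 1) hq₁.ne').congr_deriv ?_
    simp only [id]; ring
  refine ((hasDerivAt_arcsin hx.1.ne' hx.2.ne).comp q hdiv).congr_deriv ?_
  rw [hsqrt]
  field_simp

noncomputable def florianNum (q : ℝ) : ℝ :=
  2 * π * q ^ 2 * (1 + q) + 4 * q * (1 - q) * √(1 + 2 * q)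
    - 4 * (1 + 3 * q + q ^ 2 + q ^ 3) * arcsin (q / (1 + q))

lemma florianS_hasDerivAt {q : ℝ} (hq : 0 < q) :
    HasDerivAt florianS (florianNum q / (4 * q ^ 2 * √(1 + 2 * q) ^ 3)) q := by
  have hq₂ : 0 < 1 + 2 * q := by linarith
  have hr2 : √(1 + 2 * q) ^ 2 = 1 + 2 * q := Real.sq_sqrt hq₂.le
  have hnum : HasDerivAt (fun q => π * q ^ 2 + 2 * (1 - q ^ 2) * arcsin (q / (1 + q)))
      (2 * π * q - 4 * q * arcsin (q / (1 + q)) + 2 * (1 - q) / √(1 + 2 * q)) q := by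
    refine (((hasDerivAt_pow 2 q).const_mul π).add
      ((((hasDerivAt_pow 2 q).const_sub 1).const_mul 2).mul
        (hasDerivAt_arcsin_div_one_add hq₂))).congr_deriv ?_
    field_simp
    ring
  have hden :
      HasDerivAt (fun q => 2 * q * √(1 + 2 * q)) (2 * (1 + 3 * q) / √(1 + 2 * q)) q := by
    refine (((hasDerivAt_id q).const_mul 2).mul
      ((((hasDerivAt_id q).const_mul 2).const_add 1).sqrt hq₂.ne')).congr_deriv ?_
    simp only [id]
    field_simp
    linear_combination hr2
  refine (hnum.div hden (by positivity)).congr_deriv ?_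
  unfold florianNum
  field_simp
  linear_combination 8 * q ^ 2 * (π - 2 * arcsin (q / (1 + q))) * hr2

lemma florianNum_neg_of_le_half {q : ℝ} (hq₀ : 0 < q) (hq : q ≤ 1 / 2) :
    florianNum q < 0 := by
  set x := q / (1 + q) with hx
  have hx₀ : 0 < x := by positivity
  have hx₁ : x ≤ 1 := (div_le_one (by positivity)).2 (by linarith)
  have hlt_arcsin : x < arcsin x :=
    calc x = sin (arcsin x) := (sin_arcsin (by linarith) hx₁).symm
      _ < arcsin x := sin_lt (arcsin_pos.2 hx₀)
  have hsqrt : 4 * (1 - q ^ 2) * √(1 + 2 * q)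
      < 4 * (1 + 3 * q + q ^ 2 + q ^ 3) - 2 * π * q * (1 + q) ^ 2 := by
    have hπ := mul_lt_mul_of_pos_right pi_lt_d2 (by positivity : 0 < q * (1 + q) ^ 2)
    have := mul_sqrt_lt_of_sq_mul_lt (c := 1 + 2 * q) (a := 4 * (1 - q ^ 2))
      (b := 4 * (1 + 3 * q + q ^ 2 + q ^ 3) - 2 * 3.15 * q * (1 + q) ^ 2)
      (by nlinarith) (by nlinarith)
      (by nlinarith [mul_pos hq₀ hq₀, mul_nonneg hq₀.le (sub_nonneg.2 hq),
        sq_nonneg (q * (1 / 2 - q))])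
    linarith
  calc florianNum q
      = x * (2 * π * q * (1 + q) ^ 2 + 4 * (1 - q ^ 2) * √(1 + 2 * q))
        - 4 * (1 + 3 * q + q ^ 2 + q ^ 3) * arcsin x := by
        unfold florianNum; rw [hx]; field_simp; ring
    _ < x * (4 * (1 + 3 * q + q ^ 2 + q ^ 3))
        - 4 * (1 + 3 * q + q ^ 2 + q ^ 3) * arcsin x := by
        gcongr; linarith
    _ < 0 := by
        have : 0 < 4 * (1 + 3 * q + q ^ 2 + q ^ 3) := by positivity
        linarith [mul_lt_mul_of_pos_left hlt_arcsin this]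

lemma florianNum_neg_of_half_le {q : ℝ} (hq : 1 / 2 ≤ q) (hq₁ : q < 1) :
    florianNum q < 0 := by
  have hq₀ : 0 < q := by linarith
  set x := q / (1 + q) with hx
  have hx₀ : 0 ≤ x := by positivity
  have hx₁ : x ≤ 1 := (div_le_one (by positivity)).2 (by linarith)
  have hsqrt3 : √3 < 7 / 4 := (Real.sqrt_lt' (by norm_num)).2 (by norm_num)
  have hsqrt : 12 * q * (1 + q) * √(1 + 2 * q)
      < 2 * π * (1 + q) * (2 * q ^ 2 + 4 * q + 1)
        - 4 * √3 * (1 + 3 * q + q ^ 2 + q ^ 3) := by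
    have hπ := mul_lt_mul_of_pos_right pi_gt_d2
      (by positivity : 0 < (1 + q) * (2 * q ^ 2 + 4 * q + 1))
    have h3 := mul_lt_mul_of_pos_right hsqrt3 (by positivity : 0 < 1 + 3 * q + q ^ 2 + q ^ 3)
    have := mul_sqrt_lt_of_sq_mul_lt (c := 1 + 2 * q) (a := 12 * q * (1 + q))
      (b := 2 * 3.14 * (1 + q) * (2 * q ^ 2 + 4 * q + 1)
        - 4 * (7 / 4) * (1 + 3 * q + q ^ 2 + q ^ 3))
      (by positivity) (by nlinarith)
      (by nlinarith [mul_nonneg (sub_nonneg.2 hq) (sub_nonneg.2 hq₁.le), sq_nonneg (q - 1 / 2),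
        sq_nonneg (1 - q), sq_nonneg ((q - 1 / 2) * (1 - q))])
    linarith
  calc florianNum q
      ≤ 2 * π * q ^ 2 * (1 + q) + 4 * q * (1 - q) * √(1 + 2 * q)
        - 4 * (1 + 3 * q + q ^ 2 + q ^ 3) * (π / 6 - √3 / 3 * (1 - 2 * x)) := by
        unfold florianNum; gcongr; exact pi_div_six_sub_le_arcsin hx₀ hx₁
    _ = (1 - q) / (3 * (1 + q)) * (12 * q * (1 + q) * √(1 + 2 * q)
        - (2 * π * (1 + q) * (2 * q ^ 2 + 4 * q + 1)
          - 4 * √3 * (1 + 3 * q + q ^ 2 + q ^ 3))) := by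
        rw [hx]; field_simp; ring
    _ < 0 := mul_neg_of_pos_of_neg (div_pos (by linarith) (by positivity)) (by linarith)

theorem florian_strictAnti :
    StrictAntiOn florianS (Set.Ioc (0 : ℝ) 1) ∧ florianS 1 = π / Real.sqrt 12 := by
  refine ⟨strictAntiOn_of_deriv_neg (convex_Ioc 0 1)
    (fun q hq => (florianS_hasDerivAt hq.1).continuousAt.continuousWithinAt) ?_, ?_⟩
  · rw [interior_Ioc]
    rintro q ⟨hq₀, hq₁⟩
    rw [(florianS_hasDerivAt hq₀).deriv]
    refine div_neg_of_neg_of_pos ?_ (by positivity)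
    rcases le_total q (1 / 2) with hq | hq
    exacts [florianNum_neg_of_le_half hq₀ hq, florianNum_neg_of_half_le hq hq₁]
  · have h12 : √12 = 2 * √3 := by
      rw [show (12 : ℝ) = 2 ^ 2 * 3 by norm_num, Real.sqrt_mul (by positivity),
        Real.sqrt_sq (by norm_num)]
    norm_num [florianS, h12]
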